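/- arXiv:2605.02658 — 2 statements merged into one kernel-verified Lean document; each statement's English description precedes it below -/
import Mathlib

section
/- Let X be a sample space, Y: X → {-1,1} a label function, and f: X → {-1,1} a model. For features V^α, V^β (functions on X), define Ω_α = {(x,x') : V^α(x) ≠ V^α(x'), V^β(x) = V^β(x')} and S_α(f) = E[δ_{f(x),f(x')} − δ_{Y(x),Y(x')} | (x,x') ∈ Ω_α] (and symmetrically Ω_β, S_β). If V^c is a core feature, i.e., δ_{V^c(x),V^c(x')} = δ_{Y(x),Y(x')} for all x,x', then for any other feature V and any model f, S_{V^c}(f) ≥ S_V(f); in particular the core feature is never a shortcut feature relative to any feature. -/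
open Finset

/-- The core feature is never a shortcut feature relative to any other feature:
its conditional score `S` is at least that of any other feature. -/
theorem core_feature_not_shortcut {X : Type*} [Fintype X] [DecidableEq X]
    (Y f Vc V : X → ℤ)
    (hY : ∀ x, Y x = -1 ∨ Y x = 1) (hf : ∀ x, f x = -1 ∨ f x = 1)
    (hcore : ∀ x x', (Vc x = Vc x') ↔ (Y x = Y x'))
    (Ωc : Finset (X × X)) (Ωv : Finset (X × X))
    (hΩc : Ωc = Finset.univ.filter (fun p : X × X => Vc p.1 ≠ Vc p.2 ∧ V p.1 = V p.2))
    (hΩv : Ωv = Finset.univ.filter (fun p : X × X => V p.1 ≠ V p.2 ∧ Vc p.1 = Vc p.2))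
    (hc : Ωc.Nonempty) (hv : Ωv.Nonempty) :
    (∑ p ∈ Ωv, ((if f p.1 = f p.2 then (1:ℝ) else 0) - (if Y p.1 = Y p.2 then (1:ℝ) else 0)))
        / (Ωv.card : ℝ)
    ≤ (∑ p ∈ Ωc, ((if f p.1 = f p.2 then (1:ℝ) else 0) - (if Y p.1 = Y p.2 then (1:ℝ) else 0)))
        / (Ωc.card : ℝ) := by
  have hcpos : (0:ℝ) < Ωc.card := by exact_mod_cast Finset.card_pos.mpr hc
  have hvpos : (0:ℝ) < Ωv.card := by exact_mod_cast Finset.card_pos.mpr hv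
  have h1 : (∑ p ∈ Ωv, ((if f p.1 = f p.2 then (1:ℝ) else 0) - (if Y p.1 = Y p.2 then (1:ℝ) else 0))) ≤ 0 := by
    apply Finset.sum_nonpos
    intro p hp
    rw [hΩv, Finset.mem_filter] at hp
    have hYeq : Y p.1 = Y p.2 := (hcore p.1 p.2).mp hp.2.2
    simp [hYeq]
    split <;> norm_num
  have h2 : (0:ℝ) ≤ ∑ p ∈ Ωc, ((if f p.1 = f p.2 then (1:ℝ) else 0) - (if Y p.1 = Y p.2 then (1:ℝ) else 0)) := by
    apply Finset.sum_nonneg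
    intro p hp
    rw [hΩc, Finset.mem_filter] at hp
    have hYne : Y p.1 ≠ Y p.2 := fun h => hp.2.1 ((hcore p.1 p.2).mpr h)
    simp [hYne]
    split <;> norm_num
  calc _ ≤ (0:ℝ) := div_nonpos_of_nonpos_of_nonneg h1 hvpos.le
    _ ≤ _ := div_nonneg h2 hcpos.le
end

section
/- Consider binary classification with labels Y ∈ {0,1}, features V^α (shortcut) and V^β (core) inducing labels Y^α, Y^β, a model f, and conflict set C = {x : Y^α(x) ≠ Y^β(x)}. Assume: (i) E[δ_{f(X),Y(X)} | Y^α(X) = Y^β(X)] = 1 (the model is perfectly accurate off the conflict set), (ii) P(Y=0) = P(Y=1) = 1/2 and P(Y=0|C) = P(Y=1|C) = 1/2. Then E[δ_{f(X),Y^α(X)} | X ∈ C] = (S_β(f) − S_α(f))/2, i.e., the conflict-set agreement rate with the shortcut label equals the pairwise-defined shortcut bias. -/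
open Finset

private lemma sum_prod_right_aux {X : Type*} [DecidableEq X] (P Q : Finset X)
    (h : X × X → ℝ) (k : X → ℝ)
    (hk : ∀ x ∈ P, ∀ y ∈ Q, h (x, y) = k x) :
    ∑ p ∈ P ×ˢ Q, h p = (Q.card : ℝ) * ∑ x ∈ P, k x := by
  rw [Finset.sum_product, Finset.mul_sum]
  refine Finset.sum_congr rfl fun x hx => ?_
  rw [Finset.sum_congr rfl (fun y hy => hk x hx y hy), Finset.sum_const, nsmul_eq_mul]

private lemma sum_prod_left_aux {X : Type*} [DecidableEq X] (P Q : Finset X)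
    (h : X × X → ℝ) (k : X → ℝ)
    (hk : ∀ x ∈ P, ∀ y ∈ Q, h (x, y) = k y) :
    ∑ p ∈ P ×ˢ Q, h p = (P.card : ℝ) * ∑ y ∈ Q, k y := by
  rw [Finset.sum_product_right, Finset.mul_sum]
  refine Finset.sum_congr rfl fun y hy => ?_
  rw [Finset.sum_congr rfl (fun x hx => hk x hx y hy), Finset.sum_const, nsmul_eq_mul]

private lemma disjoint_prod_left_aux {X : Type*} [DecidableEq X] {s t u v : Finset X}
    (h : Disjoint s u) : Disjoint (s ×ˢ t) (u ×ˢ v) := by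
  refine Finset.disjoint_left.mpr ?_
  rintro ⟨a, b⟩ h1 h2
  exact Finset.disjoint_left.mp h (Finset.mem_product.mp h1).1 (Finset.mem_product.mp h2).1

private lemma decomp_alpha_aux {X : Type*} [DecidableEq X] (Y Yα : X → ℤ)
    (hY : ∀ x, Y x = 0 ∨ Y x = 1) (hYα : ∀ x, Yα x = 0 ∨ Yα x = 1)
    (Ω : Finset (X × X)) (C0 C1 G0 G1 : Finset X)
    (mΩ : ∀ p : X × X, p ∈ Ω ↔ (Yα p.1 ≠ Yα p.2 ∧ Y p.1 = Y p.2))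
    (mC0 : ∀ x, x ∈ C0 ↔ (Yα x ≠ Y x ∧ Y x = 0))
    (mC1 : ∀ x, x ∈ C1 ↔ (Yα x ≠ Y x ∧ Y x = 1))
    (mG0 : ∀ x, x ∈ G0 ↔ (Yα x = Y x ∧ Y x = 0))
    (mG1 : ∀ x, x ∈ G1 ↔ (Yα x = Y x ∧ Y x = 1)) :
    Ω = ((C0 ×ˢ G0) ∪ (G0 ×ˢ C0)) ∪ ((C1 ×ˢ G1) ∪ (G1 ×ˢ C1)) := by
  ext ⟨a, b⟩
  simp only [Finset.mem_union, Finset.mem_product, mΩ, mC0, mC1, mG0, mG1]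
  have := hY a; have := hY b; have := hYα a; have := hYα b
  omega

private lemma decomp_beta_aux {X : Type*} [DecidableEq X] (Y Yα : X → ℤ)
    (hY : ∀ x, Y x = 0 ∨ Y x = 1) (hYα : ∀ x, Yα x = 0 ∨ Yα x = 1)
    (Ω : Finset (X × X)) (C0 C1 G0 G1 : Finset X)
    (mΩ : ∀ p : X × X, p ∈ Ω ↔ (Yα p.1 = Yα p.2 ∧ Y p.1 ≠ Y p.2))
    (mC0 : ∀ x, x ∈ C0 ↔ (Yα x ≠ Y x ∧ Y x = 0))
    (mC1 : ∀ x, x ∈ C1 ↔ (Yα x ≠ Y x ∧ Y x = 1))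
    (mG0 : ∀ x, x ∈ G0 ↔ (Yα x = Y x ∧ Y x = 0))
    (mG1 : ∀ x, x ∈ G1 ↔ (Yα x = Y x ∧ Y x = 1)) :
    Ω = ((C0 ×ˢ G1) ∪ (G1 ×ˢ C0)) ∪ ((C1 ×ˢ G0) ∪ (G0 ×ˢ C1)) := by
  ext ⟨a, b⟩
  simp only [Finset.mem_union, Finset.mem_product, mΩ, mC0, mC1, mG0, mG1]
  have := hY a; have := hY b; have := hYα a; have := hYα b
  omega

set_option maxHeartbeats 1000000 in
/-- On the conflict set, the agreement rate of the model with the shortcut label equals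
the pairwise-defined shortcut bias `(S_β(f) − S_α(f))/2`, given perfect accuracy off the
conflict set and class balance both overall and on the conflict set. -/
theorem conflict_agreement_eq_shortcut_bias
    {X : Type*} [Fintype X] [DecidableEq X]
    (Y Yα f : X → ℤ)
    (hY : ∀ x, Y x = 0 ∨ Y x = 1) (hYα : ∀ x, Yα x = 0 ∨ Yα x = 1)
    (hf : ∀ x, f x = 0 ∨ f x = 1)
    (Cset : Finset X) (hC : Cset = Finset.univ.filter (fun x => Yα x ≠ Y x))
    (hCne : Cset.Nonempty)
    -- (i) the model is perfectly accurate off the conflict set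
    (hacc : (∑ x ∈ Finset.univ.filter (fun x => Yα x = Y x),
        (if f x = Y x then (1:ℝ) else 0))
      / ((Finset.univ.filter (fun x => Yα x = Y x)).card : ℝ) = 1)
    -- (ii) class balance overall and on the conflict set
    (hbal : (Finset.univ.filter (fun x => Y x = 0)).card * 2 = Fintype.card X)
    (hbalC : (Cset.filter (fun x => Y x = 0)).card * 2 = Cset.card)
    (Ωα Ωβ : Finset (X × X))
    (hΩα : Ωα = Finset.univ.filter (fun p : X × X => Yα p.1 ≠ Yα p.2 ∧ Y p.1 = Y p.2))
    (hΩβ : Ωβ = Finset.univ.filter (fun p : X × X => Yα p.1 = Yα p.2 ∧ Y p.1 ≠ Y p.2))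
    (hΩαne : Ωα.Nonempty) (hΩβne : Ωβ.Nonempty)
    (Sα Sβ : ℝ)
    (hSα : Sα = (∑ p ∈ Ωα, ((if f p.1 = f p.2 then (1:ℝ) else 0)
        - (if Y p.1 = Y p.2 then (1:ℝ) else 0))) / (Ωα.card : ℝ))
    (hSβ : Sβ = (∑ p ∈ Ωβ, ((if f p.1 = f p.2 then (1:ℝ) else 0)
        - (if Y p.1 = Y p.2 then (1:ℝ) else 0))) / (Ωβ.card : ℝ)) :
    (∑ x ∈ Cset, (if f x = Yα x then (1:ℝ) else 0)) / (Cset.card : ℝ)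
      = (Sβ - Sα) / 2 := by
  set Gset := Finset.univ.filter (fun x => Yα x = Y x) with hG
  -- Step 1: f = Y off the conflict set
  have hfG : ∀ x ∈ Gset, f x = Y x := by
    intro x hx
    by_contra hxf
    have hcpos : 0 < Gset.card := Finset.card_pos.mpr ⟨x, hx⟩
    have hcard : (Gset.card : ℝ) ≠ 0 := Nat.cast_ne_zero.mpr hcpos.ne'
    rw [div_eq_one_iff_eq hcard] at hacc
    have hlt : ∑ y ∈ Gset, (if f y = Y y then (1:ℝ) else 0) < ∑ y ∈ Gset, 1 :=
      Finset.sum_lt_sum (fun i _ => by split <;> norm_num) ⟨x, hx, by simp [hxf]⟩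
    rw [Finset.sum_const, nsmul_eq_mul, mul_one] at hlt
    rw [hacc] at hlt
    exact lt_irrefl _ hlt
  set C0 := Cset.filter (fun x => Y x = 0) with hC0
  set C1 := Cset.filter (fun x => Y x = 1) with hC1
  set G0 := Gset.filter (fun x => Y x = 0) with hG0
  set G1 := Gset.filter (fun x => Y x = 1) with hG1
  have mC0 : ∀ x, x ∈ C0 ↔ (Yα x ≠ Y x ∧ Y x = 0) := by
    intro x; rw [hC0, hC]; simp [Finset.mem_filter]
  have mC1 : ∀ x, x ∈ C1 ↔ (Yα x ≠ Y x ∧ Y x = 1) := by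
    intro x; rw [hC1, hC]; simp [Finset.mem_filter]
  have mG0 : ∀ x, x ∈ G0 ↔ (Yα x = Y x ∧ Y x = 0) := by
    intro x; rw [hG0, hG]; simp [Finset.mem_filter]
  have mG1 : ∀ x, x ∈ G1 ↔ (Yα x = Y x ∧ Y x = 1) := by
    intro x; rw [hG1, hG]; simp [Finset.mem_filter]
  -- pointwise facts
  have fG0 : ∀ y ∈ G0, f y = 0 := by
    intro y hy
    have h1 := (mG0 y).mp hy
    have h2 := hfG y (by rw [hG]; simp [h1.1])
    omega
  have fG1 : ∀ y ∈ G1, f y = 1 := by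
    intro y hy
    have h1 := (mG1 y).mp hy
    have h2 := hfG y (by rw [hG]; simp [h1.1])
    omega
  have YαC0 : ∀ x ∈ C0, Yα x = 1 := by
    intro x hx
    have h1 := (mC0 x).mp hx
    have := hYα x
    omega
  have YαC1 : ∀ x ∈ C1, Yα x = 0 := by
    intro x hx
    have h1 := (mC1 x).mp hx
    have := hYα x
    omega
  -- element-level disjointness
  have dC : Disjoint C0 C1 := by
    refine Finset.disjoint_left.mpr ?_
    intro a h1 h2; rw [mC0] at h1; rw [mC1] at h2; omega
  have dG : Disjoint G0 G1 := by
    refine Finset.disjoint_left.mpr ?_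
    intro a h1 h2; rw [mG0] at h1; rw [mG1] at h2; omega
  have dC0G0 : Disjoint C0 G0 := by
    refine Finset.disjoint_left.mpr ?_
    intro a h1 h2; rw [mC0] at h1; rw [mG0] at h2; omega
  have dC0G1 : Disjoint C0 G1 := by
    refine Finset.disjoint_left.mpr ?_
    intro a h1 h2; rw [mC0] at h1; rw [mG1] at h2; omega
  have dC1G0 : Disjoint C1 G0 := by
    refine Finset.disjoint_left.mpr ?_
    intro a h1 h2; rw [mC1] at h1; rw [mG0] at h2; omega
  have dC1G1 : Disjoint C1 G1 := by
    refine Finset.disjoint_left.mpr ?_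
    intro a h1 h2; rw [mC1] at h1; rw [mG1] at h2; omega
  have dCG : Disjoint Cset Gset := by
    refine Finset.disjoint_left.mpr ?_
    intro a h1 h2; rw [hC] at h1; rw [hG] at h2; simp at h1 h2; omega
  -- set decompositions
  have eC : Cset = C0 ∪ C1 := by
    ext x
    simp only [Finset.mem_union, mC0, mC1, hC, Finset.mem_filter, Finset.mem_univ, true_and]
    have := hY x; omega
  have eG : Gset = G0 ∪ G1 := by
    ext x
    simp only [Finset.mem_union, mG0, mG1, hG, Finset.mem_filter, Finset.mem_univ, true_and]
    have := hY x; omega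
  have eY0 : Finset.univ.filter (fun x => Y x = 0) = C0 ∪ G0 := by
    ext x
    simp only [Finset.mem_union, mC0, mG0, Finset.mem_filter, Finset.mem_univ, true_and]
    omega
  have eU : (Finset.univ : Finset X) = Cset ∪ Gset := by
    ext x
    simp only [Finset.mem_union, hC, hG, Finset.mem_filter, Finset.mem_univ, true_and]
    tauto
  -- card relations (naturals)
  have hcc : Cset.card = C0.card + C1.card := by
    rw [eC, Finset.card_union_of_disjoint dC]
  have hgg : Gset.card = G0.card + G1.card := by
    rw [eG, Finset.card_union_of_disjoint dG]
  have hY0card : (Finset.univ.filter (fun x => Y x = 0)).card = C0.card + G0.card := by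
    rw [eY0, Finset.card_union_of_disjoint dC0G0]
  have htot : Fintype.card X = Cset.card + Gset.card := by
    rw [← Finset.card_univ, eU, Finset.card_union_of_disjoint dCG]
  have hc01 : C1.card = C0.card := by omega
  have hg01 : G1.card = G0.card := by
    rw [hY0card] at hbal; omega
  -- Ω decompositions
  have eΩα : Ωα = ((C0 ×ˢ G0) ∪ (G0 ×ˢ C0)) ∪ ((C1 ×ˢ G1) ∪ (G1 ×ˢ C1)) :=
    decomp_alpha_aux Y Yα hY hYα Ωα C0 C1 G0 G1
      (fun p => by rw [hΩα]; simp) mC0 mC1 mG0 mG1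
  have eΩβ : Ωβ = ((C0 ×ˢ G1) ∪ (G1 ×ˢ C0)) ∪ ((C1 ×ˢ G0) ∪ (G0 ×ˢ C1)) :=
    decomp_beta_aux Y Yα hY hYα Ωβ C0 C1 G0 G1
      (fun p => by rw [hΩβ]; simp) mC0 mC1 mG0 mG1
  -- product-level disjointness
  have dp1 : Disjoint (C0 ×ˢ G0) (G0 ×ˢ C0) := disjoint_prod_left_aux dC0G0
  have dp2 : Disjoint (C1 ×ˢ G1) (G1 ×ˢ C1) := disjoint_prod_left_aux dC1G1
  have dp3 : Disjoint ((C0 ×ˢ G0) ∪ (G0 ×ˢ C0)) ((C1 ×ˢ G1) ∪ (G1 ×ˢ C1)) :=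
    Finset.disjoint_union_left.mpr
      ⟨Finset.disjoint_union_right.mpr
        ⟨disjoint_prod_left_aux dC, disjoint_prod_left_aux dC0G1⟩,
       Finset.disjoint_union_right.mpr
        ⟨disjoint_prod_left_aux dC1G0.symm, disjoint_prod_left_aux dG⟩⟩
  have dp4 : Disjoint (C0 ×ˢ G1) (G1 ×ˢ C0) := disjoint_prod_left_aux dC0G1
  have dp5 : Disjoint (C1 ×ˢ G0) (G0 ×ˢ C1) := disjoint_prod_left_aux dC1G0
  have dp6 : Disjoint ((C0 ×ˢ G1) ∪ (G1 ×ˢ C0)) ((C1 ×ˢ G0) ∪ (G0 ×ˢ C1)) :=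
    Finset.disjoint_union_left.mpr
      ⟨Finset.disjoint_union_right.mpr
        ⟨disjoint_prod_left_aux dC, disjoint_prod_left_aux dC0G0⟩,
       Finset.disjoint_union_right.mpr
        ⟨disjoint_prod_left_aux dC1G1.symm, disjoint_prod_left_aux dG.symm⟩⟩
  -- cards of Ω
  have cardΩα : Ωα.card = C0.card * G0.card + G0.card * C0.card
      + (C1.card * G1.card + G1.card * C1.card) := by
    rw [eΩα, Finset.card_union_of_disjoint dp3, Finset.card_union_of_disjoint dp1,
      Finset.card_union_of_disjoint dp2, Finset.card_product, Finset.card_product,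
      Finset.card_product, Finset.card_product]
  have cardΩβ : Ωβ.card = C0.card * G1.card + G1.card * C0.card
      + (C1.card * G0.card + G0.card * C1.card) := by
    rw [eΩβ, Finset.card_union_of_disjoint dp6, Finset.card_union_of_disjoint dp4,
      Finset.card_union_of_disjoint dp5, Finset.card_product, Finset.card_product,
      Finset.card_product, Finset.card_product]
  -- positivity
  have hc0pos : 0 < C0.card := by
    have := Finset.card_pos.mpr hCne; omega
  have hg0pos : 0 < G0.card := by
    have hpos := Finset.card_pos.mpr hΩαne
    rw [cardΩα] at hpos
    rcases Nat.eq_zero_or_pos G0.card with h | h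
    · rw [hg01, h] at hpos; simp at hpos
    · exact h
  -- key sums
  set A0 : ℝ := ∑ x ∈ C0, (if f x = 0 then (1:ℝ) else 0) with hA0
  set A1 : ℝ := ∑ x ∈ C1, (if f x = 1 then (1:ℝ) else 0) with hA1
  have hA0c : ∑ x ∈ C0, (if f x = 1 then (1:ℝ) else 0) = C0.card - A0 := by
    rw [show ∑ x ∈ C0, (if f x = 1 then (1:ℝ) else 0)
        = ∑ x ∈ C0, (1 - (if f x = 0 then (1:ℝ) else 0)) from
      Finset.sum_congr rfl fun x hx => by rcases hf x with h | h <;> simp [h]]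
    rw [Finset.sum_sub_distrib, Finset.sum_const, nsmul_eq_mul, mul_one, ← hA0]
  have hA1c : ∑ x ∈ C1, (if f x = 0 then (1:ℝ) else 0) = C1.card - A1 := by
    rw [show ∑ x ∈ C1, (if f x = 0 then (1:ℝ) else 0)
        = ∑ x ∈ C1, (1 - (if f x = 1 then (1:ℝ) else 0)) from
      Finset.sum_congr rfl fun x hx => by rcases hf x with h | h <;> simp [h]]
    rw [Finset.sum_sub_distrib, Finset.sum_const, nsmul_eq_mul, mul_one, ← hA1]
  -- the eight product sums
  have s1 : ∑ p ∈ C0 ×ˢ G0, ((if f p.1 = f p.2 then (1:ℝ) else 0)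
      - (if Y p.1 = Y p.2 then (1:ℝ) else 0)) = (G0.card : ℝ) * (A0 - C0.card) := by
    rw [sum_prod_right_aux C0 G0 _ (fun x => (if f x = 0 then (1:ℝ) else 0) - 1)
      (fun x hx y hy => by
        have h1 := ((mC0 x).mp hx).2
        have h2 := fG0 y hy
        have h3 := ((mG0 y).mp hy).2
        simp [h1, h2, h3])]
    rw [Finset.sum_sub_distrib, Finset.sum_const, nsmul_eq_mul, mul_one, ← hA0]
  have s2 : ∑ p ∈ G0 ×ˢ C0, ((if f p.1 = f p.2 then (1:ℝ) else 0)
      - (if Y p.1 = Y p.2 then (1:ℝ) else 0)) = (G0.card : ℝ) * (A0 - C0.card) := by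
    rw [sum_prod_left_aux G0 C0 _ (fun y => (if f y = 0 then (1:ℝ) else 0) - 1)
      (fun x hx y hy => by
        have h1 := ((mC0 y).mp hy).2
        have h2 := fG0 x hx
        have h3 := ((mG0 x).mp hx).2
        simp [h1, h2, h3, eq_comm])]
    rw [Finset.sum_sub_distrib, Finset.sum_const, nsmul_eq_mul, mul_one, ← hA0]
  have s3 : ∑ p ∈ C1 ×ˢ G1, ((if f p.1 = f p.2 then (1:ℝ) else 0)
      - (if Y p.1 = Y p.2 then (1:ℝ) else 0)) = (G1.card : ℝ) * (A1 - C1.card) := by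
    rw [sum_prod_right_aux C1 G1 _ (fun x => (if f x = 1 then (1:ℝ) else 0) - 1)
      (fun x hx y hy => by
        have h1 := ((mC1 x).mp hx).2
        have h2 := fG1 y hy
        have h3 := ((mG1 y).mp hy).2
        simp [h1, h2, h3])]
    rw [Finset.sum_sub_distrib, Finset.sum_const, nsmul_eq_mul, mul_one, ← hA1]
  have s4 : ∑ p ∈ G1 ×ˢ C1, ((if f p.1 = f p.2 then (1:ℝ) else 0)
      - (if Y p.1 = Y p.2 then (1:ℝ) else 0)) = (G1.card : ℝ) * (A1 - C1.card) := by
    rw [sum_prod_left_aux G1 C1 _ (fun y => (if f y = 1 then (1:ℝ) else 0) - 1)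
      (fun x hx y hy => by
        have h1 := ((mC1 y).mp hy).2
        have h2 := fG1 x hx
        have h3 := ((mG1 x).mp hx).2
        simp [h1, h2, h3, eq_comm])]
    rw [Finset.sum_sub_distrib, Finset.sum_const, nsmul_eq_mul, mul_one, ← hA1]
  have s5 : ∑ p ∈ C0 ×ˢ G1, ((if f p.1 = f p.2 then (1:ℝ) else 0)
      - (if Y p.1 = Y p.2 then (1:ℝ) else 0)) = (G1.card : ℝ) * ((C0.card : ℝ) - A0) := by
    rw [sum_prod_right_aux C0 G1 _ (fun x => if f x = 1 then (1:ℝ) else 0)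
      (fun x hx y hy => by
        have h1 := ((mC0 x).mp hx).2
        have h2 := fG1 y hy
        have h3 := ((mG1 y).mp hy).2
        simp [h1, h2, h3])]
    rw [hA0c]
  have s6 : ∑ p ∈ G1 ×ˢ C0, ((if f p.1 = f p.2 then (1:ℝ) else 0)
      - (if Y p.1 = Y p.2 then (1:ℝ) else 0)) = (G1.card : ℝ) * ((C0.card : ℝ) - A0) := by
    rw [sum_prod_left_aux G1 C0 _ (fun y => if f y = 1 then (1:ℝ) else 0)
      (fun x hx y hy => by
        have h1 := ((mC0 y).mp hy).2
        have h2 := fG1 x hx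
        have h3 := ((mG1 x).mp hx).2
        simp [h1, h2, h3, eq_comm])]
    rw [hA0c]
  have s7 : ∑ p ∈ C1 ×ˢ G0, ((if f p.1 = f p.2 then (1:ℝ) else 0)
      - (if Y p.1 = Y p.2 then (1:ℝ) else 0)) = (G0.card : ℝ) * ((C1.card : ℝ) - A1) := by
    rw [sum_prod_right_aux C1 G0 _ (fun x => if f x = 0 then (1:ℝ) else 0)
      (fun x hx y hy => by
        have h1 := ((mC1 x).mp hx).2
        have h2 := fG0 y hy
        have h3 := ((mG0 y).mp hy).2
        simp [h1, h2, h3])]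
    rw [hA1c]
  have s8 : ∑ p ∈ G0 ×ˢ C1, ((if f p.1 = f p.2 then (1:ℝ) else 0)
      - (if Y p.1 = Y p.2 then (1:ℝ) else 0)) = (G0.card : ℝ) * ((C1.card : ℝ) - A1) := by
    rw [sum_prod_left_aux G0 C1 _ (fun y => if f y = 0 then (1:ℝ) else 0)
      (fun x hx y hy => by
        have h1 := ((mC1 y).mp hy).2
        have h2 := fG0 x hx
        have h3 := ((mG0 x).mp hx).2
        simp [h1, h2, h3, eq_comm])]
    rw [hA1c]
  -- sums over Ω
  have sumΩα : ∑ p ∈ Ωα, ((if f p.1 = f p.2 then (1:ℝ) else 0)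
      - (if Y p.1 = Y p.2 then (1:ℝ) else 0))
      = (G0.card : ℝ) * (A0 - C0.card) + (G0.card : ℝ) * (A0 - C0.card)
        + ((G1.card : ℝ) * (A1 - C1.card) + (G1.card : ℝ) * (A1 - C1.card)) := by
    rw [eΩα, Finset.sum_union dp3, Finset.sum_union dp1, Finset.sum_union dp2, s1, s2, s3, s4]
  have sumΩβ : ∑ p ∈ Ωβ, ((if f p.1 = f p.2 then (1:ℝ) else 0)
      - (if Y p.1 = Y p.2 then (1:ℝ) else 0))
      = (G1.card : ℝ) * ((C0.card : ℝ) - A0) + (G1.card : ℝ) * ((C0.card : ℝ) - A0)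
        + ((G0.card : ℝ) * ((C1.card : ℝ) - A1) + (G0.card : ℝ) * ((C1.card : ℝ) - A1)) := by
    rw [eΩβ, Finset.sum_union dp6, Finset.sum_union dp4, Finset.sum_union dp5, s5, s6, s7, s8]
  -- the conflict-set sum
  have sC0 : ∑ x ∈ C0, (if f x = Yα x then (1:ℝ) else 0) = (C0.card : ℝ) - A0 := by
    rw [show ∑ x ∈ C0, (if f x = Yα x then (1:ℝ) else 0)
        = ∑ x ∈ C0, (if f x = 1 then (1:ℝ) else 0) from
      Finset.sum_congr rfl fun x hx => by rw [YαC0 x hx]]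
    exact hA0c
  have sC1 : ∑ x ∈ C1, (if f x = Yα x then (1:ℝ) else 0) = (C1.card : ℝ) - A1 := by
    rw [show ∑ x ∈ C1, (if f x = Yα x then (1:ℝ) else 0)
        = ∑ x ∈ C1, (if f x = 0 then (1:ℝ) else 0) from
      Finset.sum_congr rfl fun x hx => by rw [YαC1 x hx]]
    exact hA1c
  -- cast facts
  have hc1R : (C1.card : ℝ) = (C0.card : ℝ) := by exact_mod_cast hc01
  have hg1R : (G1.card : ℝ) = (G0.card : ℝ) := by exact_mod_cast hg01
  have hCcardR : (Cset.card : ℝ) = 2 * (C0.card : ℝ) := by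
    rw [← hbalC]; push_cast; ring
  have hΩαR : (Ωα.card : ℝ) = 4 * ((C0.card : ℝ) * (G0.card : ℝ)) := by
    rw [cardΩα, hc01, hg01]; push_cast; ring
  have hΩβR : (Ωβ.card : ℝ) = 4 * ((C0.card : ℝ) * (G0.card : ℝ)) := by
    rw [cardΩβ, hc01, hg01]; push_cast; ring
  have hcne : (C0.card : ℝ) ≠ 0 := Nat.cast_ne_zero.mpr hc0pos.ne'
  have hgne : (G0.card : ℝ) ≠ 0 := Nat.cast_ne_zero.mpr hg0pos.ne'
  -- final computation
  rw [hSα, hSβ, sumΩα, sumΩβ, hΩαR, hΩβR, hCcardR, eC, Finset.sum_union dC, sC0, sC1,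
    hc1R, hg1R]
  field_simp
  ring
end
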